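/- For every nonnegative integer n and real a with |a| ≤ 1, ∫₀^∞ xⁿ f(x) a sin(2π log x) dx = 0, where f is the standard log-normal density; hence all perturbed densities f(x)(1 + a sin(2π log x)) share the same moment sequence as f. -/

import Mathlib

/-!
Substituting `x = eᵗ` turns `xⁿ f(x) dx` into `e^{n²/2}/√(2π) · e^{-(t-n)²/2} dt` and
`sin(2π log x)` into `sin(2πt)`. Shifting `t` by the integer `n` leaves the sine unchanged, so the
integral becomes that of the odd function `e^{-t²/2} sin(2πt)` over `ℝ`, which is zero.
-/

open MeasureTheory Real Set

/-- The standard log-normal density on `(0, ∞)`. -/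
noncomputable def logNormalDensity (x : ℝ) : ℝ :=
  (1 / (x * Real.sqrt (2 * Real.pi))) * Real.exp (-(Real.log x) ^ 2 / 2)

theorem Function.Odd.integral_eq_zero {G E : Type*} [MeasurableSpace G] [AddGroup G]
    [MeasurableNeg G] [NormedAddCommGroup E] [NormedSpace ℝ E] {μ : Measure G}
    [μ.IsNegInvariant] {f : G → E} (hf : f.Odd) : ∫ x, f x ∂μ = 0 := by
  have : IsAddTorsionFree E := .of_isTorsionFree ℝ E
  have h := integral_neg_eq_self f μ
  simp only [show ∀ x, f (-x) = -f x from hf, integral_neg] at h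
  exact self_eq_neg.mp h.symm

theorem integral_comp_sub_intCast_mul_sin_eq_zero {g : ℝ → ℝ} (hg : g.Even) (k : ℤ) :
    ∫ t, g (t - k) * sin (2 * π * t) = 0 := by
  have hodd : (fun t ↦ g t * sin (2 * π * t)).Odd :=
    hg.mul_odd fun t ↦ by simp only [mul_neg, sin_neg]
  rw [← integral_add_right_eq_self _ (k : ℝ), ← hodd.integral_eq_zero (μ := volume)]
  congr 1 with t
  rw [add_sub_cancel_right, mul_add, mul_comm (2 * π) (k : ℝ), sin_add_int_mul_two_pi]

theorem integral_Ioi_zero_eq_integral_exp_smul_comp_exp {E : Type*} [NormedAddCommGroup E]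
    [NormedSpace ℝ E] (f : ℝ → E) :
    ∫ x in Ioi 0, f x = ∫ t, exp t • f (exp t) := by
  rw [← Real.range_exp, ← image_univ, integral_image_eq_integral_abs_deriv_smul MeasurableSet.univ
    (fun t _ ↦ (hasDerivAt_exp t).hasDerivWithinAt) exp_injective.injOn, Measure.restrict_univ]
  simp_rw [abs_of_pos (exp_pos _)]

theorem exp_mul_exp_pow_mul_logNormalDensity_exp (n : ℕ) (t : ℝ) :
    exp t * (exp t ^ n * logNormalDensity (exp t)) =
      exp (n ^ 2 / 2) / √(2 * π) * exp (-(t - n) ^ 2 / 2) := by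
  have hexp : exp (n * t) * exp (-t ^ 2 / 2) = exp (n ^ 2 / 2) * exp (-(t - n) ^ 2 / 2) := by
    rw [← exp_add, ← exp_add]
    ring_nf
  rw [logNormalDensity, log_exp, ← exp_nat_mul]
  field_simp
  linear_combination (norm := ring_nf) hexp

theorem lognormal_perturbation_moments_vanish_general (n : ℕ) (a : ℝ) :
    ∫ x in Ioi (0 : ℝ),
      x ^ n * (logNormalDensity x * (a * Real.sin (2 * Real.pi * Real.log x))) = 0 := by
  have hgauss : (fun t : ℝ ↦ exp (-t ^ 2 / 2)).Even := fun t ↦ by simp only [even_two, Even.neg_pow]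
  calc ∫ x in Ioi (0 : ℝ), x ^ n * (logNormalDensity x * (a * sin (2 * π * log x)))
      = ∫ t, a * (exp t * (exp t ^ n * logNormalDensity (exp t))) * sin (2 * π * t) := by
        rw [integral_Ioi_zero_eq_integral_exp_smul_comp_exp]
        congr 1 with t
        rw [log_exp, smul_eq_mul]
        ring
    _ = a * (exp (n ^ 2 / 2) / √(2 * π)) * ∫ t, exp (-(t - n) ^ 2 / 2) * sin (2 * π * t) := by
        rw [← integral_const_mul]
        simp_rw [exp_mul_exp_pow_mul_logNormalDensity_exp, mul_assoc]
    _ = 0 := by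
        rw [← Int.cast_natCast, integral_comp_sub_intCast_mul_sin_eq_zero hgauss, mul_zero]

/-- For every `n` and `|a| ≤ 1`, the perturbation `a sin(2π log x)` contributes nothing to the
`n`-th moment: `∫₀^∞ xⁿ f(x) a sin(2π log x) dx = 0`. -/
theorem lognormal_perturbation_moments_vanish (n : ℕ) (a : ℝ) (ha : |a| ≤ 1) :
    ∫ x in Ioi (0 : ℝ),
      x ^ n * (logNormalDensity x * (a * Real.sin (2 * Real.pi * Real.log x))) = 0 :=
  lognormal_perturbation_moments_vanish_general n a
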